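/- arXiv:2605.05266 — 2 statements merged into one kernel-verified Lean document; each statement's English description precedes it below -/
import Mathlib

section
/- For every reduced strategy σ ∈ S and every infoset v ∈ N(σ), the sum over all actions a ∈ A(σ) that are descendants of v of 1/β(a) equals 1/β(v). -/
open scoped Classical

/-- A finite rooted tree whose internal nodes are partitioned into infosets `N`
and actions `A`: the root is an infoset, every child of an infoset is an action,
every child of an action is an infoset or a leaf, and every infoset has at
least two children.  The tree structure is given by a parent function together
with a depth function witnessing well-foundedness. -/
structure EFTree (V : Type*) [Fintype V] [DecidableEq V] where
  root : V
  parent : V → V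
  parent_root : parent root = root
  depth : V → ℕ
  depth_root : depth root = 0
  depth_parent : ∀ v : V, v ≠ root → depth v = depth (parent v) + 1
  N : Finset V
  A : Finset V
  disj : Disjoint N A
  internal_iff : ∀ v : V, (v ∈ N ∨ v ∈ A) ↔ ∃ u : V, u ≠ root ∧ parent u = v
  root_N : root ∈ N
  infoset_child : ∀ u : V, u ≠ root → parent u ∈ N → u ∈ A
  action_child : ∀ u : V, u ≠ root → parent u ∈ A → u ∉ A
  branching : ∀ v ∈ N, 1 < (Finset.univ.filter fun u => u ≠ root ∧ parent u = v).card

namespace EFTree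

variable {V : Type*} [Fintype V] [DecidableEq V] (T : EFTree V)

/-- The set `C(v)` of children of a node `v`. -/
def children (v : V) : Finset V := Finset.univ.filter fun u => u ≠ T.root ∧ T.parent u = v

/-- The set `L` of leaves: the nodes that are neither infosets nor actions. -/
def leaves : Finset V := Finset.univ \ (T.N ∪ T.A)

/-- `Desc u v` means `u` is a descendant of `v` (every node is a descendant of itself). -/
def Desc (u v : V) : Prop := ∃ k : ℕ, T.parent^[k] u = v

/-- The reachable set `V(σ)` of a (sub-)strategy `σ` started at the node `w`:
the minimal set of nodes containing `w`, containing `σ v` for every infoset `v`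
in the set, and containing all children of every action in the set. -/
def reachFrom (w : V) (σ : V → V) : Set V :=
  ⋂₀ {s : Set V | w ∈ s ∧ (∀ v ∈ T.N, v ∈ s → σ v ∈ s) ∧
      ∀ a ∈ T.A, a ∈ s → ∀ u ∈ T.children a, u ∈ s}

/-- The reachable set `V(σ)` of a strategy `σ`. -/
def reachS (σ : V → V) : Set V := T.reachFrom T.root σ

/-- `σ : V → V` canonically represents a reduced sub-strategy at the node `w`:
at every infoset in its reachable set it selects a child, and everywhere else it
is the identity (so that each reduced sub-strategy, i.e. each restriction of a
sub-strategy at `w` to the infosets it can reach, has exactly one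
representative). -/
def IsRedSubStrat (w : V) (σ : V → V) : Prop :=
  (∀ v ∈ T.N, v ∈ T.reachFrom w σ → σ v ∈ T.children v) ∧
  ∀ v : V, ¬(v ∈ T.N ∧ v ∈ T.reachFrom w σ) → σ v = v

/-- `σ : V → V` canonically represents a reduced strategy, i.e. a member of `S`. -/
def IsRedStrat (σ : V → V) : Prop := T.IsRedSubStrat T.root σ

/-- The set `A(σ) = A ∩ V(σ)` of actions reachable under a reduced (sub-)strategy. -/
noncomputable def Aset (σ : V → V) : Finset V := T.A.filter fun a => a ∈ T.reachS σ

/-- The set `A(σ) = A ∩ V(σ)` for a reduced sub-strategy at `w`. -/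
noncomputable def AsetFrom (w : V) (σ : V → V) : Finset V := T.A.filter fun a => a ∈ T.reachFrom w σ

/-- An environment chooses a child of every action. -/
def IsEnv (μ : V → V) : Prop := ∀ a ∈ T.A, μ a ∈ T.children a

/-- The reachable set `V(μ)` of an environment `μ`: the minimal set of nodes
containing the root, all children of every infoset in the set, and `μ a` for
every action `a` in the set. -/
def reachE (μ : V → V) : Set V :=
  ⋂₀ {s : Set V | T.root ∈ s ∧ (∀ v ∈ T.N, v ∈ s → ∀ u ∈ T.children v, u ∈ s) ∧
      ∀ a ∈ T.A, a ∈ s → μ a ∈ s}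

/-- `Z(μ)`: the set of actions reachable under `μ` whose chosen child is a leaf. -/
noncomputable def Zset (μ : V → V) : Finset V := T.A.filter fun a => a ∈ T.reachE μ ∧ μ a ∈ T.leaves

/-- A policy assigns to each action a probability in `[0,1]`, summing to one
over the children of each infoset. -/
def IsPolicy (π : V → ℝ) : Prop :=
  (∀ a ∈ T.A, 0 ≤ π a ∧ π a ≤ 1) ∧ ∀ v ∈ T.N, ∑ a ∈ T.children v, π a = 1

/-- The root-to-leaf path traversed when the reduced strategy `σ` is played
against the environment `μ`: the minimal set of nodes containing the root,
containing `σ v` for every infoset `v` in the set, and `μ a` for every action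
`a` in the set. -/
def playPath (σ μ : V → V) : Set V :=
  ⋂₀ {s : Set V | T.root ∈ s ∧ (∀ v ∈ T.N, v ∈ s → σ v ∈ s) ∧
      ∀ a ∈ T.A, a ∈ s → μ a ∈ s}

/-- `z` is the last action node on the play path of `(σ, μ)`: it is an action on
the path of which every other action on the path is an ancestor. -/
def IsLastAction (σ μ : V → V) (z : V) : Prop :=
  z ∈ T.A ∧ z ∈ T.playPath σ μ ∧ ∀ a ∈ T.A, a ∈ T.playPath σ μ → T.Desc z a

end EFTree

/-!
Under a reduced strategy the actions below a reachable infoset `v` are the chosen action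
`a = σ v` together with the actions below the infoset children `u` of `a`, and these pieces
are disjoint. By induction down the tree each `u` contributes `1 / β u = m u / β a`, so the
sum is `(1 + ∑ m u) / β a = m a / β a = 1 / β v`.
-/

namespace EFTree

variable {V : Type*} [Fintype V] [DecidableEq V] (T : EFTree V)

lemma mem_children {u v : V} : u ∈ T.children v ↔ u ≠ T.root ∧ T.parent u = v := by
  simp [children]

lemma desc_refl (v : V) : T.Desc v v := ⟨0, rfl⟩

lemma desc_trans {a b c : V} (hab : T.Desc a b) (hbc : T.Desc b c) : T.Desc a c := by
  obtain ⟨k, rfl⟩ := hab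
  obtain ⟨l, rfl⟩ := hbc
  exact ⟨l + k, Function.iterate_add_apply _ _ _ _⟩

lemma desc_of_mem_children {u v : V} (h : u ∈ T.children v) : T.Desc u v :=
  ⟨1, (T.mem_children.mp h).2⟩

lemma desc_parent_of_desc {b v : V} (h : T.Desc b v) (hne : b ≠ v) : T.Desc (T.parent b) v := by
  obtain ⟨_ | k, hk⟩ := h
  · exact absurd hk hne
  · exact ⟨k, hk⟩

lemma eq_root_of_root_desc {v : V} (h : T.Desc T.root v) : v = T.root := by
  obtain ⟨k, rfl⟩ := h
  exact Function.iterate_fixed T.parent_root k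

lemma depth_iterate_parent_le (k : ℕ) (x : V) : T.depth (T.parent^[k] x) ≤ T.depth x := by
  induction k generalizing x with
  | zero => rfl
  | succ k ih =>
    refine (ih (T.parent x)).trans ?_
    by_cases hx : x = T.root
    · rw [hx, T.parent_root]
    · rw [T.depth_parent x hx]
      exact Nat.le_succ _

lemma depth_le_of_desc {x y : V} (h : T.Desc x y) : T.depth y ≤ T.depth x := by
  obtain ⟨k, rfl⟩ := h
  exact T.depth_iterate_parent_le k x

lemma eq_of_desc_of_depth_le {x y : V} (h : T.Desc x y) (hd : T.depth x ≤ T.depth y) :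
    x = y := by
  obtain ⟨_ | k, rfl⟩ := h
  · rfl
  by_cases hx : x = T.root
  · subst hx
    exact (Function.iterate_fixed T.parent_root _).symm
  · have := T.depth_iterate_parent_le k (T.parent x)
    have := T.depth_parent x hx
    rw [Function.iterate_succ_apply] at hd
    omega

lemma desc_antisymm {x y : V} (hxy : T.Desc x y) (hyx : T.Desc y x) : x = y :=
  T.eq_of_desc_of_depth_le hxy (T.depth_le_of_desc hyx)

lemma desc_total {b u₁ u₂ : V} (h₁ : T.Desc b u₁) (h₂ : T.Desc b u₂) :
    T.Desc u₁ u₂ ∨ T.Desc u₂ u₁ := by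
  obtain ⟨k₁, rfl⟩ := h₁
  obtain ⟨k₂, hk₂⟩ := h₂
  rcases le_total k₁ k₂ with h | h
  · refine .inl ⟨k₂ - k₁, ?_⟩
    rw [← Function.iterate_add_apply, Nat.sub_add_cancel h, hk₂]
  · refine .inr ⟨k₁ - k₂, ?_⟩
    rw [← hk₂, ← Function.iterate_add_apply, Nat.sub_add_cancel h]

lemma depth_of_mem_children {u v : V} (h : u ∈ T.children v) : T.depth u = T.depth v + 1 := by
  obtain ⟨hu, rfl⟩ := T.mem_children.mp h
  exact T.depth_parent u hu

lemma not_desc_of_mem_children {u v : V} (h : u ∈ T.children v) : ¬T.Desc v u := fun hd => by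
  have := T.depth_le_of_desc hd
  have := T.depth_of_mem_children h
  omega

lemma eq_of_mem_children_of_desc {a u₁ u₂ b : V} (h₁ : u₁ ∈ T.children a)
    (h₂ : u₂ ∈ T.children a) (hb₁ : T.Desc b u₁) (hb₂ : T.Desc b u₂) : u₁ = u₂ := by
  have hd : T.depth u₁ = T.depth u₂ := by
    rw [T.depth_of_mem_children h₁, T.depth_of_mem_children h₂]
  rcases T.desc_total hb₁ hb₂ with h | h
  · exact T.eq_of_desc_of_depth_le h hd.le
  · exact (T.eq_of_desc_of_depth_le h hd.ge).symm

lemma exists_mem_children_desc_of_desc {b v : V} (h : T.Desc b v) (hne : b ≠ v) :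
    ∃ c ∈ T.children v, T.Desc b c := by
  obtain ⟨k, hk⟩ := h
  induction k generalizing b with
  | zero => exact absurd hk hne
  | succ k ih =>
    rw [Function.iterate_succ_apply] at hk
    by_cases hbv : T.parent b = v
    · have hb : b ≠ T.root := fun hb => hne (by rw [← hbv, hb, T.parent_root])
      exact ⟨b, T.mem_children.mpr ⟨hb, hbv⟩, T.desc_refl b⟩
    · obtain ⟨c, hc, hbc⟩ := ih hbv hk
      exact ⟨c, hc, T.desc_trans ⟨1, rfl⟩ hbc⟩

/-- Actions alternate with infosets. -/
lemma exists_infoset_child_of_desc {a b : V} (ha : a ∈ T.A) (hb : b ∈ T.A)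
    (h : T.Desc b a) (hne : b ≠ a) : ∃ c ∈ T.children a, c ∈ T.N ∧ T.Desc b c := by
  obtain ⟨c, hc, hbc⟩ := T.exists_mem_children_desc_of_desc h hne
  obtain ⟨hc_root, hc_par⟩ := T.mem_children.mp hc
  have hcA : c ∉ T.A := T.action_child c hc_root (hc_par ▸ ha)
  obtain ⟨d, hd, -⟩ := T.exists_mem_children_desc_of_desc hbc fun hbc => hcA (hbc ▸ hb)
  have hc_internal := (T.internal_iff c).mpr ⟨d, T.mem_children.mp hd⟩
  exact ⟨c, hc, hc_internal.resolve_right hcA, hbc⟩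

lemma card_desc_lt_of_desc {u v : V} (h : T.Desc u v) (hne : u ≠ v) :
    (Finset.univ.filter (T.Desc · u)).card < (Finset.univ.filter (T.Desc · v)).card := by
  refine Finset.card_lt_card ⟨fun x hx => ?_, fun hsub => hne ?_⟩
  · simp only [Finset.mem_filter, Finset.mem_univ, true_and] at hx ⊢
    exact T.desc_trans hx h
  · have hv : T.Desc v u := by simpa using hsub (by simpa using T.desc_refl v)
    exact T.desc_antisymm h hv

@[elab_as_elim]
theorem desc_induction {motive : V → Prop}
    (ind : ∀ v, (∀ u, T.Desc u v → u ≠ v → motive u) → motive v) (v : V) : motive v :=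
  (measure fun v => (Finset.univ.filter (T.Desc · v)).card).wf.induction v fun v ih =>
    ind v fun u hu hne => ih u (T.card_desc_lt_of_desc hu hne)

inductive Reach (σ : V → V) : V → Prop
  | root : Reach σ T.root
  | strat {v : V} : v ∈ T.N → Reach σ v → Reach σ (σ v)
  | child {a u : V} : a ∈ T.A → Reach σ a → u ∈ T.children a → Reach σ u

lemma mem_reachS_iff {σ : V → V} {x : V} : x ∈ T.reachS σ ↔ T.Reach σ x := by
  refine ⟨fun hx => hx {y | T.Reach σ y} ⟨.root, fun v hv h => .strat hv h,
    fun a ha h u hu => .child ha h hu⟩, fun hx s hs => ?_⟩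
  induction hx with
  | root => exact hs.1
  | strat hv _ ih => exact hs.2.1 _ hv ih
  | child ha _ hu ih => exact hs.2.2 _ ha ih _ hu

lemma strat_mem_reachS {σ : V → V} {v : V} (hv : v ∈ T.N) (h : v ∈ T.reachS σ) :
    σ v ∈ T.reachS σ :=
  T.mem_reachS_iff.mpr (.strat hv (T.mem_reachS_iff.mp h))

lemma mem_reachS_of_mem_children {σ : V → V} {a u : V} (ha : a ∈ T.A) (h : a ∈ T.reachS σ)
    (hu : u ∈ T.children a) : u ∈ T.reachS σ :=
  T.mem_reachS_iff.mpr (.child ha (T.mem_reachS_iff.mp h) hu)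

/-- Walking up from a reachable node, each infoset passed is left through its `σ`-child. -/
lemma desc_strat_of_reach {σ : V → V} (hσ : T.IsRedStrat σ) {v b : V} (hv : v ∈ T.N)
    (hb : T.Reach σ b) (hbv : T.Desc b v) (hne : b ≠ v) : T.Desc b (σ v) := by
  induction hb with
  | root => exact absurd (T.eq_root_of_root_desc hbv).symm hne
  | @strat w hw hw_reach ih =>
    have hσw := hσ.1 w hw (T.mem_reachS_iff.mpr hw_reach)
    have hwv : T.Desc w v := (T.mem_children.mp hσw).2 ▸ T.desc_parent_of_desc hbv hne
    by_cases hw_eq : w = v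
    · exact hw_eq ▸ T.desc_refl _
    · exact T.desc_trans (T.desc_of_mem_children hσw) (ih hwv hw_eq)
  | @child a u ha _ hu ih =>
    have hav : T.Desc a v := (T.mem_children.mp hu).2 ▸ T.desc_parent_of_desc hbv hne
    have ha_ne : a ≠ v := fun h => Finset.disjoint_left.mp T.disj hv (h ▸ ha)
    exact T.desc_trans (T.desc_of_mem_children hu) (ih hav ha_ne)

noncomputable def actionsBelow (σ : V → V) (v : V) : Finset V :=
  (T.Aset σ).filter (T.Desc · v)

lemma pairwiseDisjoint_actionsBelow_children (σ : V → V) (a : V) :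
    (T.children a : Set V).PairwiseDisjoint (T.actionsBelow σ) := by
  intro u₁ hu₁ u₂ hu₂ hne
  refine Finset.disjoint_left.mpr fun b hb₁ hb₂ => hne ?_
  exact T.eq_of_mem_children_of_desc hu₁ hu₂ (Finset.mem_filter.mp hb₁).2
    (Finset.mem_filter.mp hb₂).2

lemma actionsBelow_eq_insert_biUnion {σ : V → V} (hσ : T.IsRedStrat σ) {v : V} (hv : v ∈ T.N)
    (hv_reach : v ∈ T.reachS σ) :
    T.actionsBelow σ v =
      insert (σ v) (((T.children (σ v)).filter (· ∈ T.N)).biUnion (T.actionsBelow σ)) := by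
  have hσv := hσ.1 v hv hv_reach
  obtain ⟨hσv_root, hσv_par⟩ := T.mem_children.mp hσv
  have hσvA : σ v ∈ T.A := T.infoset_child _ hσv_root (by rwa [hσv_par])
  ext b
  simp only [actionsBelow, Aset, Finset.mem_insert, Finset.mem_biUnion, Finset.mem_filter]
  constructor
  · rintro ⟨⟨hbA, hb_reach⟩, hbv⟩
    have hb_ne : b ≠ v := fun h => Finset.disjoint_left.mp T.disj hv (h ▸ hbA)
    have hb_σv := T.desc_strat_of_reach hσ hv (T.mem_reachS_iff.mp hb_reach) hbv hb_ne
    by_cases hb_eq : b = σ v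
    · exact .inl hb_eq
    · obtain ⟨c, hc, hcN, hbc⟩ := T.exists_infoset_child_of_desc hσvA hbA hb_σv hb_eq
      exact .inr ⟨c, ⟨hc, hcN⟩, ⟨hbA, hb_reach⟩, hbc⟩
  · rintro (rfl | ⟨u, ⟨hu, -⟩, hb, hbu⟩)
    · exact ⟨⟨hσvA, T.strat_mem_reachS hv hv_reach⟩, T.desc_of_mem_children hσv⟩
    · exact ⟨hb, T.desc_trans hbu (T.desc_trans (T.desc_of_mem_children hu)
        (T.desc_of_mem_children hσv))⟩

lemma sum_actionsBelow {M : Type*} [AddCommMonoid M] (f : V → M) {σ : V → V}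
    (hσ : T.IsRedStrat σ) {v : V} (hv : v ∈ T.N) (hv_reach : v ∈ T.reachS σ) :
    ∑ a ∈ T.actionsBelow σ v, f a =
      f (σ v) + ∑ u ∈ (T.children (σ v)).filter (· ∈ T.N), ∑ a ∈ T.actionsBelow σ u, f a := by
  rw [T.actionsBelow_eq_insert_biUnion hσ hv hv_reach, Finset.sum_insert, Finset.sum_biUnion]
  · exact (T.pairwiseDisjoint_actionsBelow_children σ (σ v)).subset
      (Finset.coe_subset.mpr (Finset.filter_subset _ _))
  · simp only [Finset.mem_biUnion, not_exists, not_and]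
    exact fun u hu hσv_u =>
      T.not_desc_of_mem_children (Finset.mem_filter.mp hu).1 (Finset.mem_filter.mp hσv_u).2

end EFTree

theorem stmt5_general {V : Type*} [Fintype V] [DecidableEq V] (T : EFTree V)
    (m : V → ℕ)
    (hmA : ∀ a ∈ T.A, m a = 1 + ∑ v ∈ (T.children a).filter (· ∈ T.N), m v)
    (β : V → ℝ)
    (hβA : ∀ a ∈ T.A, β a = (m a : ℝ) * β (T.parent a))
    (hβN : ∀ v ∈ T.N, v ≠ T.root → β v = β (T.parent v) / (m v : ℝ))
    (σ : V → V) (hσ : T.IsRedStrat σ) :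
    ∀ v ∈ T.N, v ∈ T.reachS σ →
      ∑ a ∈ (T.Aset σ).filter (fun a => T.Desc a v), (1 : ℝ) / β a = 1 / β v := by
  intro v
  induction v using T.desc_induction with | ind v ih => ?_
  intro hv hv_reach
  show ∑ a ∈ T.actionsBelow σ v, (1 : ℝ) / β a = 1 / β v
  have ha := hσ.1 v hv hv_reach
  obtain ⟨ha_root, ha_par⟩ := T.mem_children.mp ha
  have haA : σ v ∈ T.A := T.infoset_child _ ha_root (by rwa [ha_par])
  have hK : ∀ u ∈ (T.children (σ v)).filter (· ∈ T.N),
      ∑ b ∈ T.actionsBelow σ u, (1 : ℝ) / β b = m u / β (σ v) := by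
    intro u hu
    obtain ⟨hu_child, huN⟩ := Finset.mem_filter.mp hu
    obtain ⟨hu_root, hu_par⟩ := T.mem_children.mp hu_child
    have hu_reach := T.mem_reachS_of_mem_children haA (T.strat_mem_reachS hv hv_reach) hu_child
    have hu_desc : T.Desc u v :=
      T.desc_trans (T.desc_of_mem_children hu_child) (T.desc_of_mem_children ha)
    have hu_ne : u ≠ v := fun h =>
      T.not_desc_of_mem_children ha (by subst h; exact T.desc_of_mem_children hu_child)
    rw [EFTree.actionsBelow, ih u hu_desc hu_ne huN hu_reach, hβN u huN hu_root, hu_par,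
      one_div_div]
  have hma : (m (σ v) : ℝ) = 1 + ∑ u ∈ (T.children (σ v)).filter (· ∈ T.N), (m u : ℝ) := by
    exact_mod_cast hmA _ haA
  have hma_ne : (m (σ v) : ℝ) ≠ 0 := by rw [hmA _ haA]; positivity
  rw [T.sum_actionsBelow _ hσ hv hv_reach, Finset.sum_congr rfl hK, ← Finset.sum_div, ← add_div,
    ← hma, hβA _ haA, ha_par, div_mul_cancel_left₀ hma_ne, one_div]

theorem stmt5 {V : Type*} [Fintype V] [DecidableEq V] (T : EFTree V)
    (m : V → ℕ)
    (hmA : ∀ a ∈ T.A, m a = 1 + ∑ v ∈ (T.children a).filter (· ∈ T.N), m v)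
    (hmN : ∀ v ∈ T.N, m v = ∑ a ∈ T.children v, m a)
    (β : V → ℝ) (hβr : β T.root = 1)
    (hβA : ∀ a ∈ T.A, β a = (m a : ℝ) * β (T.parent a))
    (hβN : ∀ v ∈ T.N, v ≠ T.root → β v = β (T.parent v) / (m v : ℝ))
    (σ : V → V) (hσ : T.IsRedStrat σ) :
    ∀ v ∈ T.N, v ∈ T.reachS σ →
      ∑ a ∈ (T.Aset σ).filter (fun a => T.Desc a v), (1 : ℝ) / β a = 1 / β v :=
  stmt5_general T m hmA β hβA hβN σ hσ
end

section
/- For every environment μ and every action a ∈ A ∩ V(μ), the sum of β(b) over all actions b ∈ Z(μ) that are descendants of a (where a counts as a descendant of itself) equals β(a). -/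
open scoped Classical

section Helpers

variable {V : Type*} [Fintype V] [DecidableEq V] (T : EFTree V) (μ : V → V)

lemma mem_children_iff {u v : V} : u ∈ T.children v ↔ u ≠ T.root ∧ T.parent u = v := by
  simp [EFTree.children]

lemma mem_leaves_iff {u : V} : u ∈ T.leaves ↔ u ∉ T.N ∧ u ∉ T.A := by
  simp [EFTree.leaves]

lemma reachE_root : T.root ∈ T.reachE μ :=
  Set.mem_sInter.mpr fun _ hs => hs.1

lemma reachE_children {v u : V} (hv : v ∈ T.N) (hvr : v ∈ T.reachE μ)
    (hu : u ∈ T.children v) : u ∈ T.reachE μ :=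
  Set.mem_sInter.mpr fun s hs => hs.2.1 v hv (Set.mem_sInter.mp hvr s hs) u hu

lemma reachE_mu {a : V} (ha : a ∈ T.A) (har : a ∈ T.reachE μ) : μ a ∈ T.reachE μ :=
  Set.mem_sInter.mpr fun s hs => hs.2.2 a ha (Set.mem_sInter.mp har s hs)

lemma reachE_parent (hμE : T.IsEnv μ) {u : V} (hu : u ∈ T.reachE μ) (hur : u ≠ T.root) :
    T.parent u ∈ T.reachE μ ∧ (T.parent u ∈ T.A → u = μ (T.parent u)) := by
  set S : Set V := {u | u ∈ T.reachE μ ∧ (u = T.root ∨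
      (T.parent u ∈ T.reachE μ ∧ (T.parent u ∈ T.A → u = μ (T.parent u))))} with hS
  have hSmem : S ∈ {s : Set V | T.root ∈ s ∧ (∀ v ∈ T.N, v ∈ s → ∀ u ∈ T.children v, u ∈ s) ∧
      ∀ a ∈ T.A, a ∈ s → μ a ∈ s} := by
    refine ⟨⟨reachE_root T μ, Or.inl rfl⟩, ?_, ?_⟩
    · intro v hv hvS w hw
      have hw' := (mem_children_iff T).mp hw
      refine ⟨reachE_children T μ hv hvS.1 hw, Or.inr ⟨?_, ?_⟩⟩
      · rw [hw'.2]; exact hvS.1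
      · intro hA
        rw [hw'.2] at hA
        exact absurd hA (Finset.disjoint_left.mp T.disj hv)
    · intro a ha haS
      have hma := (mem_children_iff T).mp (hμE a ha)
      refine ⟨reachE_mu T μ ha haS.1, Or.inr ⟨?_, fun _ => by rw [hma.2]⟩⟩
      rw [hma.2]; exact haS.1
  have : u ∈ S := Set.sInter_subset_of_mem hSmem hu
  rcases this.2 with h | h
  · exact absurd h hur
  · exact h

lemma depth_iter : ∀ (k : ℕ) (u : V),
    T.parent^[k] u = T.root ∨ T.depth (T.parent^[k] u) + k = T.depth u := by
  intro k
  induction k with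
  | zero => intro u; right; simp
  | succ k ih =>
    intro u
    rw [Function.iterate_succ_apply]
    by_cases hu : u = T.root
    · left
      rw [hu, T.parent_root, Function.iterate_fixed T.parent_root]
    · rcases ih (T.parent u) with h | h
      · exact Or.inl h
      · right
        rw [T.depth_parent u hu]
        omega

lemma desc_unique {b x y : V} (hx : T.Desc b x) (hy : T.Desc b y)
    (hxr : x ≠ T.root) (hyr : y ≠ T.root) (hd : T.depth x = T.depth y) : x = y := by
  obtain ⟨k, hk⟩ := hx
  obtain ⟨k', hk'⟩ := hy
  rcases depth_iter T k b with h | h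
  · exact absurd (hk ▸ h) hxr
  rcases depth_iter T k' b with h' | h'
  · exact absurd (hk' ▸ h') hyr
  rw [hk] at h; rw [hk'] at h'
  have : k = k' := by omega
  rw [← hk, ← hk', this]

lemma iter_ne_root {b a : V} {k : ℕ} (hk : T.parent^[k] b = a) (har : a ≠ T.root) :
    ∀ i ≤ k, T.parent^[i] b ≠ T.root := by
  intro i hi hroot
  apply har
  have : T.parent^[k - i] (T.parent^[i] b) = a := by
    rw [← Function.iterate_add_apply]
    rwa [Nat.sub_add_cancel hi]
  rw [hroot, Function.iterate_fixed T.parent_root] at this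
  exact this.symm

lemma reach_iter (hμE : T.IsEnv μ) {b a : V} (hb : b ∈ T.reachE μ) {k : ℕ} (hk : T.parent^[k] b = a)
    (har : a ≠ T.root) : ∀ i ≤ k, T.parent^[i] b ∈ T.reachE μ := by
  intro i hi
  induction i with
  | zero => simpa using hb
  | succ i ih =>
    rw [Function.iterate_succ_apply']
    exact (reachE_parent T μ hμE (ih (by omega)) (iter_ne_root T hk har i (by omega))).1

lemma step_mu {b a : V} (hb : b ∈ T.reachE μ) (hμE : T.IsEnv μ) {k : ℕ}
    (hk : T.parent^[k + 1] b = a) (ha : a ∈ T.A) :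
    T.parent^[k] b = μ a := by
  have har : a ≠ T.root := fun h =>
    Finset.disjoint_left.mp T.disj T.root_N (h ▸ ha)
  have hc : T.parent^[k] b ∈ T.reachE μ := reach_iter T μ hμE hb hk har k (by omega)
  have hpc : T.parent (T.parent^[k] b) = a := by
    rw [← hk, Function.iterate_succ_apply']
  have hcnr : T.parent^[k] b ≠ T.root := iter_ne_root T hk har k (by omega)
  have := (reachE_parent T μ hμE hc hcnr).2
  rw [hpc] at this
  exact this ha

lemma m_pos (m : V → ℕ)
    (hmA : ∀ a ∈ T.A, m a = 1 + ∑ v ∈ (T.children a).filter (· ∈ T.N), m v)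
    (hmN : ∀ v ∈ T.N, m v = ∑ a ∈ T.children v, m a)
    {v : V} (hv : v ∈ T.N) : 0 < m v := by
  have hcard := T.branching v hv
  have hne : (T.children v).Nonempty := by
    rw [← Finset.card_pos]
    exact lt_trans one_pos (by exact hcard)
  obtain ⟨a, hac⟩ := hne
  have ha' := (mem_children_iff T).mp hac
  have haA : a ∈ T.A := T.infoset_child a ha'.1 (ha'.2 ▸ hv)
  have h1 : 1 ≤ m a := by rw [hmA a haA]; omega
  have h2 : m a ≤ m v := by
    rw [hmN v hv]
    exact Finset.single_le_sum (fun _ _ => Nat.zero_le _) hac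
  omega

end Helpers

theorem stmt7 {V : Type*} [Fintype V] [DecidableEq V] (T : EFTree V)
    (m : V → ℕ)
    (hmA : ∀ a ∈ T.A, m a = 1 + ∑ v ∈ (T.children a).filter (· ∈ T.N), m v)
    (hmN : ∀ v ∈ T.N, m v = ∑ a ∈ T.children v, m a)
    (β : V → ℝ) (hβr : β T.root = 1)
    (hβA : ∀ a ∈ T.A, β a = (m a : ℝ) * β (T.parent a))
    (hβN : ∀ v ∈ T.N, v ≠ T.root → β v = β (T.parent v) / (m v : ℝ))
    (μ : V → V) (hμ : T.IsEnv μ) :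
    ∀ a ∈ T.A, a ∈ T.reachE μ →
      ∑ b ∈ (T.Zset μ).filter (fun b => T.Desc b a), β b = β a := by
  have key : ∀ n : ℕ, ∀ a, m a < n → a ∈ T.A → a ∈ T.reachE μ →
      ∑ b ∈ (T.Zset μ).filter (fun b => T.Desc b a), β b = β a := by
    intro n
    induction n with
    | zero => intro a h; omega
    | succ n ih =>
      intro a hma ha har
      have hanr : a ≠ T.root := fun h =>
        Finset.disjoint_left.mp T.disj T.root_N (h ▸ ha)
      have hv0c : μ a ∈ T.children a := hμ a ha
      obtain ⟨hv0nr, hv0p⟩ := (mem_children_iff T).mp hv0c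
      have hv0A : μ a ∉ T.A := T.action_child (μ a) hv0nr (by rw [hv0p]; exact ha)
      have hZ : ∀ b ∈ T.Zset μ, b ∈ T.A ∧ b ∈ T.reachE μ ∧ μ b ∈ T.leaves := by
        intro b hb
        have := Finset.mem_filter.mp hb
        exact ⟨this.1, this.2⟩
      by_cases hv0N : μ a ∈ T.N
      · -- infoset case
        have hv0r : μ a ∈ T.reachE μ := reachE_mu T μ ha har
        have hunion : (T.Zset μ).filter (fun b => T.Desc b a) =
            (T.children (μ a)).biUnion (fun a' => (T.Zset μ).filter (fun b => T.Desc b a')) := by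
          ext b
          simp only [Finset.mem_filter, Finset.mem_biUnion]
          constructor
          · rintro ⟨hbZ, k, hk⟩
            obtain ⟨hbA, hbr, hbl⟩ := hZ b hbZ
            match k, hk with
            | 0, hk =>
              exfalso
              simp only [Function.iterate_zero_apply] at hk
              subst hk
              exact ((mem_leaves_iff T).mp hbl).1 hv0N
            | 1, hk =>
              exfalso
              have := step_mu T μ hbr hμ hk ha
              simp only [Function.iterate_zero_apply] at this
              rw [this] at hbA; exact hv0A hbA
            | (k + 2), hk =>
              have hc : T.parent^[k + 1] b = μ a := step_mu T μ hbr hμ hk ha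
              have hpc : T.parent (T.parent^[k] b) = μ a := by
                rw [← hc, Function.iterate_succ_apply']
              have hdnr : T.parent^[k] b ≠ T.root := by
                intro h
                rw [h, T.parent_root] at hpc
                exact hv0nr hpc.symm
              exact ⟨T.parent^[k] b, (mem_children_iff T).mpr ⟨hdnr, hpc⟩,
                ⟨hbZ, k, rfl⟩⟩
          · rintro ⟨a', ha'c, hbZ, k, hk⟩
            obtain ⟨ha'nr, ha'p⟩ := (mem_children_iff T).mp ha'c
            refine ⟨hbZ, k + 2, ?_⟩
            rw [Function.iterate_succ_apply', Function.iterate_succ_apply', hk, ha'p, hv0p]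
        have hdisj : ∀ x ∈ T.children (μ a), ∀ y ∈ T.children (μ a), x ≠ y →
            Disjoint ((T.Zset μ).filter (fun b => T.Desc b x))
              ((T.Zset μ).filter (fun b => T.Desc b y)) := by
          intro x hx y hy hxy
          obtain ⟨hxnr, hxp⟩ := (mem_children_iff T).mp hx
          obtain ⟨hynr, hyp⟩ := (mem_children_iff T).mp hy
          rw [Finset.disjoint_left]
          intro b hbx hby
          apply hxy
          refine desc_unique T (Finset.mem_filter.mp hbx).2 (Finset.mem_filter.mp hby).2
            hxnr hynr ?_
          rw [T.depth_parent x hxnr, T.depth_parent y hynr, hxp, hyp]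
        rw [hunion, Finset.sum_biUnion hdisj]
        have hstep : ∀ a' ∈ T.children (μ a),
            ∑ b ∈ (T.Zset μ).filter (fun b => T.Desc b a'), β b = (m a' : ℝ) * β (μ a) := by
          intro a' ha'c
          obtain ⟨ha'nr, ha'p⟩ := (mem_children_iff T).mp ha'c
          have ha'A : a' ∈ T.A := T.infoset_child a' ha'nr (by rw [ha'p]; exact hv0N)
          have ha'r : a' ∈ T.reachE μ := reachE_children T μ hv0N hv0r ha'c
          have hma' : m a' < n := by
            have h1 : m a' ≤ m (μ a) := by
              rw [hmN (μ a) hv0N]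
              exact Finset.single_le_sum (fun _ _ => Nat.zero_le _) ha'c
            have h2 : m (μ a) < m a := by
              rw [hmA a ha]
              have : m (μ a) ≤ ∑ v ∈ (T.children a).filter (· ∈ T.N), m v :=
                Finset.single_le_sum (fun _ _ => Nat.zero_le _)
                  (Finset.mem_filter.mpr ⟨hv0c, hv0N⟩)
              omega
            omega
          rw [ih a' hma' ha'A ha'r, hβA a' ha'A, ha'p]
        rw [Finset.sum_congr rfl hstep, ← Finset.sum_mul, ← Nat.cast_sum,
          ← hmN (μ a) hv0N, hβN (μ a) hv0N hv0nr, hv0p]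
        have hm0 : (m (μ a) : ℝ) ≠ 0 := by
          exact_mod_cast (m_pos T m hmA hmN hv0N).ne'
        field_simp
      · -- leaf case
        have hv0l : μ a ∈ T.leaves := (mem_leaves_iff T).mpr ⟨hv0N, hv0A⟩
        have hsingle : (T.Zset μ).filter (fun b => T.Desc b a) = {a} := by
          ext b
          simp only [Finset.mem_filter, Finset.mem_singleton]
          constructor
          · rintro ⟨hbZ, k, hk⟩
            obtain ⟨hbA, hbr, hbl⟩ := hZ b hbZ
            match k, hk with
            | 0, hk => simpa using hk
            | 1, hk =>
              exfalso
              have := step_mu T μ hbr hμ hk ha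
              simp only [Function.iterate_zero_apply] at this
              subst this
              exact ((mem_leaves_iff T).mp hv0l).2 hbA
            | (k + 2), hk =>
              exfalso
              have hc : T.parent^[k + 1] b = μ a := step_mu T μ hbr hμ hk ha
              have hpc : T.parent (T.parent^[k] b) = μ a := by
                rw [← hc, Function.iterate_succ_apply']
              have hdnr : T.parent^[k] b ≠ T.root := by
                intro h
                rw [h, T.parent_root] at hpc
                exact hv0nr hpc.symm
              have : μ a ∈ T.N ∨ μ a ∈ T.A :=
                (T.internal_iff (μ a)).mpr ⟨T.parent^[k] b, hdnr, hpc⟩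
              rcases this with h | h
              · exact hv0N h
              · exact hv0A h
          · rintro rfl
            exact ⟨Finset.mem_filter.mpr ⟨ha, har, hv0l⟩, 0, rfl⟩
        rw [hsingle, Finset.sum_singleton]
  intro a ha har
  exact key (m a + 1) a (Nat.lt_succ_self _) ha har
end
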